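/- arXiv:math-ph/0610042 — 3 statements merged into one kernel-verified Lean document; each statement's English description precedes it below -/
import Mathlib

section
/- If P, Q, V, G are n×n real matrices with M, m > 0 scalars (regarded as scalar matrices) satisfying the collision-conservation equations P M + V m = M·I, P M P + V m V = M·I (interpreting the transposed versions with symmetric products), and if γ² = m/M, then any solution of the form P = (sin θ/(2γ))(I − γ² U), Q = (γ sin θ/2)(I + U), V = (sin θ/(2γ))(I + U), G = (γ sin θ/2)(I − U/γ²) with U orthogonal (UᵀU = I), cos θ = (1−γ²)/(1+γ²), sin θ = 2γ/(1+γ²), satisfies: Pᵀ M + Vᵀ m = M·I, Qᵀ M + Gᵀ m = m·I, Pᵀ M P + Vᵀ m V = M·I, Qᵀ M Q + Gᵀ m G = m·I, and Pᵀ M Q + Vᵀ m G = 0. -/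
set_option maxHeartbeats 2000000


open Matrix

/-- The canonical solution matrices satisfy the collision conservation equations. -/
theorem canonical_solution_conservation (n : ℕ) (hn : 1 ≤ n)
    (M γ : ℝ) (hM : 0 < M) (hγ : 0 < γ) (m : ℝ) (hm : m = γ ^ 2 * M)
    (cθ sθ : ℝ) (hc : cθ = (1 - γ ^ 2) / (1 + γ ^ 2)) (hs : sθ = 2 * γ / (1 + γ ^ 2))
    (U : Matrix (Fin n) (Fin n) ℝ) (hU : Uᵀ * U = 1)
    (P Q V G : Matrix (Fin n) (Fin n) ℝ)
    (hP : P = (sθ / (2 * γ)) • (1 - γ ^ 2 • U))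
    (hQ : Q = (γ * sθ / 2) • (1 + U))
    (hV : V = (sθ / (2 * γ)) • (1 + U))
    (hG : G = (γ * sθ / 2) • (1 - (γ ^ 2)⁻¹ • U)) :
    M • Pᵀ + m • Vᵀ = M • (1 : Matrix (Fin n) (Fin n) ℝ) ∧
    M • Qᵀ + m • Gᵀ = m • (1 : Matrix (Fin n) (Fin n) ℝ) ∧
    M • (Pᵀ * P) + m • (Vᵀ * V) = M • (1 : Matrix (Fin n) (Fin n) ℝ) ∧
    M • (Qᵀ * Q) + m • (Gᵀ * G) = m • (1 : Matrix (Fin n) (Fin n) ℝ) ∧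
    M • (Pᵀ * Q) + m • (Vᵀ * G) = 0 := by
  subst hm hs hP hQ hV hG
  have huu : U * Uᵀ = 1 := mul_eq_one_comm.mp hU
  have hγ2 : γ ≠ 0 := ne_of_gt hγ
  have h1 : (1:ℝ) + γ ^ 2 ≠ 0 := by positivity
  refine ⟨?_, ?_, ?_, ?_, ?_⟩ <;>
  · simp only [Matrix.transpose_smul, Matrix.transpose_sub, Matrix.transpose_add,
      Matrix.transpose_one, Matrix.smul_mul, Matrix.mul_smul, sub_mul, mul_sub,
      add_mul, mul_add, Matrix.one_mul, Matrix.mul_one, hU, huu, smul_smul,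
      smul_add, smul_sub]
    match_scalars <;> field_simp <;> ring
end

section
/- General collision energy identity: for Δ⁺v = v₂ + v₁, Δ⁻v = v₂ − v₁ related to (v₁, w₁) by v₂ = P v₁ + Q w₁, w₂ = V v₁ + G w₁ with the matrices of the canonical solution (orthogonal U, Z = I − 2(I+U)^{-1}), the total kinetic energy H = (M|v₁|² + m|w₁|²)/2 satisfies 8H/(M(1+γ²)) = |Δ⁺v − Z Δ⁻v|² + (1/γ²)|Δ⁻v|² + (1/γ²)(Δ⁻v)ᵀ Z Zᵀ (Δ⁻v). -/
set_option maxHeartbeats 1000000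

open Matrix

/-- General collision energy identity in terms of the scattering matrix `Z`. -/
theorem general_collision_energy_identity (n : ℕ) (hn : 1 ≤ n)
    (M γ : ℝ) (hM : 0 < M) (hγ : 0 < γ) (m : ℝ) (hm : m = γ ^ 2 * M)
    (cθ sθ : ℝ) (hc : cθ = (1 - γ ^ 2) / (1 + γ ^ 2)) (hs : sθ = 2 * γ / (1 + γ ^ 2))
    (U : Matrix (Fin n) (Fin n) ℝ) (hU : Uᵀ * U = 1) (hinv : IsUnit (1 + U))
    (Z : Matrix (Fin n) (Fin n) ℝ) (hZ : Z = 1 - (2 : ℝ) • (1 + U)⁻¹)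
    (P Q : Matrix (Fin n) (Fin n) ℝ)
    (hP : P = (sθ / (2 * γ)) • (1 - γ ^ 2 • U))
    (hQ : Q = (γ * sθ / 2) • (1 + U))
    (v₁ w₁ v₂ Δp Δm : Fin n → ℝ)
    (hv₂ : v₂ = P.mulVec v₁ + Q.mulVec w₁)
    (hΔp : Δp = v₂ + v₁) (hΔm : Δm = v₂ - v₁)
    (H : ℝ) (hH : H = (M * (v₁ ⬝ᵥ v₁) + m * (w₁ ⬝ᵥ w₁)) / 2) :
    8 * H / (M * (1 + γ ^ 2)) =
      (Δp - Z.mulVec Δm) ⬝ᵥ (Δp - Z.mulVec Δm)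
        + (1 / γ ^ 2) * (Δm ⬝ᵥ Δm)
        + (1 / γ ^ 2) * (Δm ⬝ᵥ (Z * Zᵀ).mulVec Δm) := by
  have hγ0 : γ ≠ 0 := ne_of_gt hγ
  have hc0 : (1:ℝ) + γ ^ 2 ≠ 0 := by positivity
  have hM0 : M ≠ 0 := ne_of_gt hM
  have hUU : U * Uᵀ = 1 := mul_eq_one_comm.mp hU
  have hdet : IsUnit (1 + U).det := (Matrix.isUnit_iff_isUnit_det _).mp hinv
  have hinvmul : (1 + U)⁻¹ * (1 + U) = 1 := Matrix.nonsing_inv_mul _ hdet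
  have hdetT : IsUnit (1 + Uᵀ).det := by
    have h1 : (1 + Uᵀ) = (1 + U)ᵀ := by simp
    rw [h1, Matrix.det_transpose]; exact hdet
  -- Δm formula
  have hΔm' : Δm = (γ ^ 2 / (1 + γ ^ 2)) • (1 + U).mulVec (w₁ - v₁) := by
    rw [hΔm, hv₂, hP, hQ, hs]
    simp only [Matrix.smul_mulVec, Matrix.sub_mulVec, Matrix.add_mulVec,
      Matrix.one_mulVec, Matrix.smul_mulVec, Matrix.mulVec_sub]
    funext i
    simp only [Pi.add_apply, Pi.sub_apply, Pi.smul_apply, smul_eq_mul]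
    field_simp
    ring
  have hk : (1 + U)⁻¹.mulVec Δm = (γ ^ 2 / (1 + γ ^ 2)) • (w₁ - v₁) := by
    rw [hΔm', Matrix.mulVec_smul, Matrix.mulVec_mulVec, hinvmul, Matrix.one_mulVec]
  -- Δp - Z Δm
  have hD : Δp - Z.mulVec Δm = (2 / (1 + γ ^ 2)) • (v₁ + γ ^ 2 • w₁) := by
    rw [hZ, Matrix.sub_mulVec, Matrix.one_mulVec, Matrix.smul_mulVec, hk]
    rw [hΔp, hΔm]
    funext i
    simp only [Pi.add_apply, Pi.sub_apply, Pi.smul_apply, smul_eq_mul]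
    field_simp
    ring
  -- Zᵀ (1+U) = 1 - U
  have hTinv : (1 + Uᵀ)⁻¹ * (1 + U) = U := by
    have h2 : (1 + Uᵀ) * U = 1 + U := by
      rw [add_mul, one_mul, hU]; exact add_comm _ _
    calc (1 + Uᵀ)⁻¹ * (1 + U) = (1 + Uᵀ)⁻¹ * ((1 + Uᵀ) * U) := by rw [h2]
      _ = ((1 + Uᵀ)⁻¹ * (1 + Uᵀ)) * U := by rw [mul_assoc]
      _ = U := by rw [Matrix.nonsing_inv_mul _ hdetT, one_mul]
  have hZT : Zᵀ * (1 + U) = 1 - U := by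
    rw [hZ]
    have : (1 - (2:ℝ) • (1 + U)⁻¹)ᵀ = 1 - (2:ℝ) • (1 + Uᵀ)⁻¹ := by
      simp [Matrix.transpose_sub, Matrix.transpose_smul, Matrix.transpose_nonsing_inv]
    rw [this, sub_mul, one_mul, Matrix.smul_mul, hTinv, two_smul]
    abel
  have hZtΔm : Zᵀ.mulVec Δm = (γ ^ 2 / (1 + γ ^ 2)) • (1 - U).mulVec (w₁ - v₁) := by
    rw [hΔm', Matrix.mulVec_smul, Matrix.mulVec_mulVec, hZT]
  have hQuad : Δm ⬝ᵥ (Z * Zᵀ).mulVec Δm = (Zᵀ.mulVec Δm) ⬝ᵥ (Zᵀ.mulVec Δm) := by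
    rw [← Matrix.mulVec_mulVec, Matrix.dotProduct_mulVec, ← Matrix.mulVec_transpose]
  -- orthogonality on dot products
  have hOrth : ∀ x y : Fin n → ℝ, (U.mulVec x) ⬝ᵥ (U.mulVec y) = x ⬝ᵥ y := by
    intro x y
    rw [Matrix.dotProduct_mulVec, ← Matrix.mulVec_transpose, Matrix.mulVec_mulVec, hU,
      Matrix.one_mulVec]
  -- expand everything
  rw [hD, hQuad, hZtΔm, hΔm', hH, hm]
  simp only [Matrix.mulVec_sub, Matrix.sub_mulVec, Matrix.add_mulVec, Matrix.one_mulVec,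
    smul_dotProduct, dotProduct_smul, add_dotProduct, dotProduct_add, sub_dotProduct,
    dotProduct_sub, smul_eq_mul]
  have h1 := hOrth v₁ v₁
  have h2 := hOrth v₁ w₁
  have h3 := hOrth w₁ w₁
  have h4 := hOrth w₁ v₁
  rw [h1, h2, h3, h4]
  rw [dotProduct_comm w₁ v₁]
  field_simp
  ring
end

section
/- With Δ⁺v = v₂+v₁, Δ⁻v = v₂−v₁, Δ⁺w = w₂+w₁, Δ⁻w = w₂−w₁ for the general canonical elastic collision, Δ⁺v = Δ⁺w − (1+γ²) Z Δ⁻w and Δ⁻v = −γ² Δ⁻w. -/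
open Matrix

/-- In the general canonical elastic collision,
`Δ⁺v = Δ⁺w − (1+γ²) Z Δ⁻w` and `Δ⁻v = −γ² Δ⁻w`. -/
theorem collision_velocity_differences (n : ℕ) (hn : 1 ≤ n) (γ : ℝ) (hγ : 0 < γ)
    (cθ sθ : ℝ) (hc : cθ = (1 - γ ^ 2) / (1 + γ ^ 2)) (hs : sθ = 2 * γ / (1 + γ ^ 2))
    (U : Matrix (Fin n) (Fin n) ℝ) (hU : Uᵀ * U = 1) (hinv : IsUnit (1 + U))
    (Z : Matrix (Fin n) (Fin n) ℝ) (hZ : Z = 1 - (2 : ℝ) • (1 + U)⁻¹)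
    (P Q V G : Matrix (Fin n) (Fin n) ℝ)
    (hP : P = (sθ / (2 * γ)) • (1 - γ ^ 2 • U))
    (hQ : Q = (γ * sθ / 2) • (1 + U))
    (hV : V = (sθ / (2 * γ)) • (1 + U))
    (hG : G = (γ * sθ / 2) • (1 - (γ ^ 2)⁻¹ • U))
    (v₁ w₁ v₂ w₂ : Fin n → ℝ)
    (hv₂ : v₂ = P.mulVec v₁ + Q.mulVec w₁)
    (hw₂ : w₂ = V.mulVec v₁ + G.mulVec w₁) :
    v₂ + v₁ = (w₂ + w₁) - (1 + γ ^ 2) • Z.mulVec (w₂ - w₁) ∧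
    v₂ - v₁ = -(γ ^ 2) • (w₂ - w₁) := by
  have hγ0 : γ ≠ 0 := ne_of_gt hγ
  have hγ2 : (1 : ℝ) + γ ^ 2 ≠ 0 := by positivity
  have hγ4 : (γ : ℝ) ^ 2 ≠ 0 := pow_ne_zero _ hγ0
  -- Z * (1 + U) = U - 1
  have hdet : IsUnit (1 + U).det := (Matrix.isUnit_iff_isUnit_det _).mp hinv
  have hZU : Z * (1 + U) = U - 1 := by
    rw [hZ, sub_mul, one_mul, Matrix.smul_mul, Matrix.nonsing_inv_mul _ hdet]
    module
  -- w₂ - w₁ factored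
  have hdw : w₂ - w₁ = ((1 + γ ^ 2)⁻¹ : ℝ) • (1 + U).mulVec (v₁ - w₁) := by
    rw [hw₂, hV, hG, hs]
    simp only [Matrix.smul_mulVec, Matrix.add_mulVec, Matrix.sub_mulVec,
      Matrix.one_mulVec, Matrix.mulVec_sub]
    match_scalars <;> field_simp <;> ring
  have hZv : Z.mulVec (w₂ - w₁)
      = ((1 + γ ^ 2)⁻¹ : ℝ) • (U - 1).mulVec (v₁ - w₁) := by
    rw [hdw, Matrix.mulVec_smul, Matrix.mulVec_mulVec, hZU]
  constructor
  · rw [hZv, hv₂, hw₂, hP, hQ, hV, hG, hs]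
    simp only [Matrix.smul_mulVec, Matrix.add_mulVec, Matrix.sub_mulVec,
      Matrix.one_mulVec, Matrix.mulVec_sub]
    match_scalars <;> field_simp <;> ring
  · rw [hv₂, hw₂, hP, hQ, hV, hG, hs]
    simp only [Matrix.smul_mulVec, Matrix.add_mulVec, Matrix.sub_mulVec,
      Matrix.one_mulVec, Matrix.mulVec_sub]
    match_scalars <;> field_simp <;> ring
end
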